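/- There exists a constant C > 0 such that for every R > 0 and every h ∈ H²(ℝ³) with Δh supported in the ball {x ∈ ℝ³ : |x| ≤ R}, one has ‖∇h‖_{L²(ℝ³)} ≤ C R ‖Δh‖_{L²(ℝ³)}. -/

import Mathlib

noncomputable section

open MeasureTheory Real

abbrev E3 := EuclideanSpace ℝ (Fin 3)

/-- The `i`-th coordinate direction in `ℝ³`. -/
noncomputable def e3 (i : Fin 3) : E3 := EuclideanSpace.single i 1

/-- Partial derivative of `h : ℝ³ → ℝ` in the `i`-th coordinate direction. -/
noncomputable def dd (i : Fin 3) (h : E3 → ℝ) (x : E3) : ℝ := fderiv ℝ h x (e3 i)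

/-- The Laplacian `Δh = Σᵢ ∂ᵢ∂ᵢ h`. -/
noncomputable def lap (h : E3 → ℝ) (x : E3) : ℝ := ∑ i, dd i (dd i h) x

/-!
Integrating by parts, `‖∇h‖₂² = -∫ h Δh`, and since `Δh` vanishes off the ball
`B = B(0, R)` this is at most `‖𝟙_B h‖₂ ‖Δh‖₂` by Cauchy–Schwarz. Hölder on `B` and the
Gagliardo–Nirenberg–Sobolev inequality `‖u‖₆ ≤ C ‖∇u‖₂` give
`‖𝟙_B h‖₂ ≤ |B|^{1/3} ‖h‖_{L⁶(B)} ≤ c R ‖∇h‖₂`. The Sobolev inequality is applied to `χ(·/t) h`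
for a smooth cutoff `χ`; the error `O(‖h‖₂ / t)` coming from the derivative of the cutoff
disappears as `t → ∞`. Dividing `‖∇h‖₂² ≤ c R ‖∇h‖₂ ‖Δh‖₂` by `‖∇h‖₂` gives the estimate.
-/

open Metric Filter Set
open scoped ENNReal NNReal InnerProductSpace Topology

section L2

variable {α : Type*} [MeasurableSpace α] {μ : Measure α}

lemma sqrt_integral_norm_sq_eq_lpNorm {F : Type*} [NormedAddCommGroup F] {f : α → F}
    (hf : AEStronglyMeasurable f μ) : √(∫ x, ‖f x‖ ^ 2 ∂μ) = lpNorm f 2 μ := by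
  rw [lpNorm_eq_integral_norm_rpow_toReal two_ne_zero ENNReal.ofNat_ne_top hf, sqrt_eq_rpow]
  norm_num

lemma abs_integral_mul_le_lpNorm_mul_lpNorm {u v : α → ℝ} (hu : MemLp u 2 μ)
    (hv : MemLp v 2 μ) : |∫ x, u x * v x ∂μ| ≤ lpNorm u 2 μ * lpNorm v 2 μ := by
  have h : ∫ x, u x * v x ∂μ = ⟪hu.toLp u, hv.toLp v⟫_ℝ := by
    rw [L2.inner_def]
    refine integral_congr_ae ?_
    filter_upwards [hu.coeFn_toLp, hv.coeFn_toLp] with x hux hvx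
    simp [hux, hvx, mul_comm]
  rw [h, ← toReal_eLpNorm hu.1, ← toReal_eLpNorm hv.1, ← Lp.norm_toLp u hu, ← Lp.norm_toLp v hv]
  exact abs_real_inner_le_norm _ _

end L2

section Gradient

variable {F : Type*} [NormedAddCommGroup F] [InnerProductSpace ℝ F] [CompleteSpace F]

lemma norm_gradient_eq_norm_fderiv (f : F → ℝ) (x : F) : ‖gradient f x‖ = ‖fderiv ℝ f x‖ := by
  rw [← toDual_gradient]
  exact (LinearIsometryEquiv.norm_map _ _).symm

lemma sqrt_integral_norm_gradient_sq_eq_lpNorm_fderiv [MeasurableSpace F] {μ : Measure F}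
    {f : F → ℝ} (hf : AEStronglyMeasurable (fderiv ℝ f) μ) :
    √(∫ x, ‖gradient f x‖ ^ 2 ∂μ) = lpNorm (fderiv ℝ f) 2 μ := by
  simp_rw [norm_gradient_eq_norm_fderiv]
  exact sqrt_integral_norm_sq_eq_lpNorm hf

end Gradient

section Cutoff

variable {E : Type*} [NormedAddCommGroup E] [NormedSpace ℝ E] [HasContDiffBump E]

variable (E) in
def unitBump : ContDiffBump (0 : E) := ⟨1, 2, one_pos, one_lt_two⟩

def cutoff (t : ℝ) (x : E) : ℝ := unitBump E (t⁻¹ • x)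

variable {t : ℝ}

lemma contDiff_cutoff {n : ℕ∞} : ContDiff ℝ n (cutoff (E := E) t) :=
  (unitBump E).contDiff.comp (contDiff_const_smul _)

lemma hasCompactSupport_cutoff [FiniteDimensional ℝ E] (ht : t ≠ 0) :
    HasCompactSupport (cutoff (E := E) t) :=
  (unitBump E).hasCompactSupport.comp_homeomorph (Homeomorph.smulOfNeZero t⁻¹ (inv_ne_zero ht))

lemma cutoff_eq_one {x : E} (hx : ‖x‖ ≤ t) : cutoff t x = 1 := by
  have ht : 0 ≤ t := (norm_nonneg x).trans hx
  refine (unitBump E).one_of_mem_closedBall ?_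
  rw [mem_closedBall_zero_iff, norm_smul, norm_inv, norm_eq_abs, abs_of_nonneg ht]
  exact inv_mul_le_one_of_le₀ hx ht

lemma abs_cutoff_le_one (x : E) : |cutoff t x| ≤ 1 := by
  rw [cutoff, abs_of_nonneg (unitBump E).nonneg]
  exact (unitBump E).le_one

lemma exists_norm_fderiv_cutoff_le [FiniteDimensional ℝ E] :
    ∃ M, ∀ t : ℝ, ∀ x : E, ‖fderiv ℝ (cutoff t) x‖ ≤ M / |t| := by
  obtain ⟨M, hM⟩ := ((unitBump E).hasCompactSupport.fderiv ℝ).exists_bound_of_continuous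
    ((unitBump E).contDiff.continuous_fderiv one_ne_zero)
  refine ⟨M, fun t x => ?_⟩
  rw [show fderiv ℝ (cutoff t) x = t⁻¹ • fderiv ℝ (unitBump E) (t⁻¹ • x) from fderiv_comp_smul _,
    norm_smul, norm_inv, norm_eq_abs, inv_mul_eq_div]
  gcongr
  exact hM _

lemma eLpNorm_fderiv_cutoff_mul_le [FiniteDimensional ℝ E] [MeasurableSpace E] [BorelSpace E]
    {μ : Measure E} {h : E → ℝ} (hh : ContDiff ℝ 1 h) {p : ℝ≥0∞} (hp : 1 ≤ p)
    {K : ℝ} (hK : ∀ x : E, ‖fderiv ℝ (cutoff t) x‖ ≤ K) :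
    eLpNorm (fderiv ℝ fun x => cutoff t x * h x) p μ ≤
      eLpNorm (fderiv ℝ h) p μ + ENNReal.ofReal K * eLpNorm h p μ := by
  have hχ : ContDiff ℝ 1 (cutoff (E := E) t) := contDiff_cutoff
  have hprod : (fderiv ℝ fun x => cutoff t x * h x) =
      fun x => cutoff t x • fderiv ℝ h x + h x • fderiv ℝ (cutoff t) x := by
    funext x
    have hχx : DifferentiableAt ℝ (cutoff t) x := hχ.differentiable one_ne_zero x
    have hhx : DifferentiableAt ℝ h x := hh.differentiable one_ne_zero x
    exact fderiv_fun_mul hχx hhx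
  rw [hprod]
  refine (eLpNorm_add_le (f := fun x => cutoff t x • fderiv ℝ h x)
    (g := fun x => h x • fderiv ℝ (cutoff t) x) ?_ ?_ hp).trans (add_le_add ?_ ?_)
  · exact (hχ.continuous.smul (hh.continuous_fderiv one_ne_zero)).aestronglyMeasurable
  · exact (hh.continuous.smul (hχ.continuous_fderiv one_ne_zero)).aestronglyMeasurable
  · refine eLpNorm_mono fun x => ?_
    rw [norm_smul, norm_eq_abs]
    exact mul_le_of_le_one_left (norm_nonneg _) (abs_cutoff_le_one x)
  · refine eLpNorm_le_mul_eLpNorm_of_ae_le_mul (ae_of_all _ fun x => ?_) p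
    rw [norm_smul, mul_comm]
    exact mul_le_mul_of_nonneg_right (hK x) (norm_nonneg _)

end Cutoff

section Sobolev

variable {E : Type*} [NormedAddCommGroup E] [InnerProductSpace ℝ E] [FiniteDimensional ℝ E]
  [MeasurableSpace E] [BorelSpace E] {μ : Measure E} [μ.IsAddHaarMeasure]

lemma eLpNorm_restrict_closedBall_le_eLpNorm_fderiv {h : E → ℝ} (hh : ContDiff ℝ 1 h)
    {p p' : ℝ≥0} (hp : 1 ≤ p) (h0 : MemLp h p μ) (hn : 0 < Module.finrank ℝ E)
    (hp' : (p' : ℝ)⁻¹ = p⁻¹ - (Module.finrank ℝ E : ℝ)⁻¹) (R : ℝ) :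
    eLpNorm h p' (μ.restrict (closedBall 0 R)) ≤
      eLpNormLESNormFDerivOfEqInnerConst μ p * eLpNorm (fderiv ℝ h) p μ := by
  obtain ⟨M, hM⟩ := exists_norm_fderiv_cutoff_le (E := E)
  have hbound : ∀ t, R ≤ t → t ≠ 0 → eLpNorm h p' (μ.restrict (closedBall 0 R)) ≤
      eLpNormLESNormFDerivOfEqInnerConst μ p *
        (eLpNorm (fderiv ℝ h) p μ + ENNReal.ofReal (M / |t|) * eLpNorm h p μ) := by
    intro t hRt ht
    have hcut : (fun x => cutoff t x * h x) =ᵐ[μ.restrict (closedBall 0 R)] h := by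
      refine (ae_restrict_iff' measurableSet_closedBall).2 (ae_of_all _ fun x hx => ?_)
      simp only [cutoff_eq_one ((mem_closedBall_zero_iff.1 hx).trans hRt), one_mul]
    calc eLpNorm h p' (μ.restrict (closedBall 0 R))
        = eLpNorm (fun x => cutoff t x * h x) p' (μ.restrict (closedBall 0 R)) :=
          (eLpNorm_congr_ae hcut).symm
      _ ≤ eLpNorm (fun x => cutoff t x * h x) p' μ :=
          eLpNorm_mono_measure _ Measure.restrict_le_self
      _ ≤ eLpNormLESNormFDerivOfEqInnerConst μ p *
            eLpNorm (fderiv ℝ fun x => cutoff t x * h x) p μ :=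
          eLpNorm_le_eLpNorm_fderiv_of_eq_inner μ (contDiff_cutoff.mul hh)
            (hasCompactSupport_cutoff ht).mul_right hp hn hp'
      _ ≤ _ := by
          gcongr
          exact eLpNorm_fderiv_cutoff_mul_le hh (by exact_mod_cast hp) (hM t)
  have hlim : Tendsto (fun t : ℝ => eLpNormLESNormFDerivOfEqInnerConst μ p *
        (eLpNorm (fderiv ℝ h) p μ + ENNReal.ofReal (M / |t|) * eLpNorm h p μ)) atTop
      (𝓝 (eLpNormLESNormFDerivOfEqInnerConst μ p * (eLpNorm (fderiv ℝ h) p μ + 0))) := by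
    refine ENNReal.Tendsto.const_mul (tendsto_const_nhds.add ?_) (Or.inr ENNReal.coe_ne_top)
    rw [← zero_mul (eLpNorm h p μ)]
    refine ENNReal.Tendsto.mul_const ?_ (Or.inr h0.eLpNorm_ne_top)
    rw [← ENNReal.ofReal_zero]
    exact ENNReal.tendsto_ofReal (tendsto_const_nhds.div_atTop tendsto_abs_atTop_atTop)
  rw [add_zero] at hlim
  refine ge_of_tendsto hlim ?_
  filter_upwards [eventually_ge_atTop R, eventually_gt_atTop 0] with t hRt ht
  exact hbound t hRt ht.ne'

end Sobolev

section Euclidean3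

lemma eLpNorm_indicator_closedBall_le {h : E3 → ℝ} (hh : ContDiff ℝ 1 h) (h0 : MemLp h 2 volume)
    {R : ℝ} (hR : 0 ≤ R) :
    eLpNorm ((closedBall (0 : E3) R).indicator h) 2 volume ≤
      ENNReal.ofReal R * volume (closedBall (0 : E3) 1) ^ (3⁻¹ : ℝ) *
        eLpNormLESNormFDerivOfEqInnerConst (volume : Measure E3) 2 *
          eLpNorm (fderiv ℝ h) 2 volume := by
  have hdim : Module.finrank ℝ E3 = 3 := finrank_euclideanSpace_fin
  have hball : volume (closedBall (0 : E3) R) ^ (3⁻¹ : ℝ) =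
      ENNReal.ofReal R * volume (closedBall (0 : E3) 1) ^ (3⁻¹ : ℝ) := by
    rw [Measure.addHaar_closedBall' _ _ hR, hdim, ENNReal.mul_rpow_of_nonneg _ _ (by norm_num),
      ENNReal.ofReal_pow hR, ← ENNReal.rpow_natCast, ← ENNReal.rpow_mul]
    norm_num
  have holder := eLpNorm_le_eLpNorm_mul_rpow_measure_univ (p := 2) (q := 6) (by norm_num)
    (hh.continuous.aestronglyMeasurable (μ := volume.restrict (closedBall (0 : E3) R)))
  have hexp : 1 / (2 : ℝ≥0∞).toReal - 1 / (6 : ℝ≥0∞).toReal = 3⁻¹ := by norm_num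
  rw [Measure.restrict_apply_univ, hexp] at holder
  have sobolev := eLpNorm_restrict_closedBall_le_eLpNorm_fderiv (μ := volume) hh (p := 2)
    (p' := 6) (by norm_num) h0 (by rw [hdim]; norm_num) (by rw [hdim]; norm_num) R
  rw [eLpNorm_indicator_eq_eLpNorm_restrict measurableSet_closedBall]
  calc eLpNorm h 2 (volume.restrict (closedBall 0 R))
      ≤ eLpNorm h 6 (volume.restrict (closedBall 0 R)) *
          volume (closedBall (0 : E3) R) ^ (3⁻¹ : ℝ) := holder
    _ ≤ eLpNormLESNormFDerivOfEqInnerConst (volume : Measure E3) 2 *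
          eLpNorm (fderiv ℝ h) 2 volume * volume (closedBall (0 : E3) R) ^ (3⁻¹ : ℝ) := by
        gcongr
        exact_mod_cast sobolev
    _ = _ := by rw [hball]; ring

def ballSobolevConst : ℝ :=
  (volume (closedBall (0 : E3) 1) ^ (3⁻¹ : ℝ) *
    eLpNormLESNormFDerivOfEqInnerConst (volume : Measure E3) 2).toReal

lemma lpNorm_indicator_closedBall_le {h : E3 → ℝ} (hh : ContDiff ℝ 1 h) (h0 : MemLp h 2 volume)
    (hDh : MemLp (fderiv ℝ h) 2 volume) {R : ℝ} (hR : 0 ≤ R) :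
    lpNorm ((closedBall (0 : E3) R).indicator h) 2 volume ≤
      ballSobolevConst * R * lpNorm (fderiv ℝ h) 2 volume := by
  rw [← toReal_eLpNorm (h0.indicator measurableSet_closedBall).1, ← toReal_eLpNorm hDh.1]
  refine (ENNReal.toReal_mono ?_ (eLpNorm_indicator_closedBall_le hh h0 hR)).trans_eq ?_
  · have := hDh.eLpNorm_ne_top
    have := (measure_closedBall_lt_top (μ := volume) (x := (0 : E3)) (r := 1)).ne
    finiteness
  · simp only [ballSobolevConst, ENNReal.toReal_mul, ENNReal.toReal_ofReal hR]
    ring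

lemma gradient_apply_eq_dd (h : E3 → ℝ) (x : E3) (i : Fin 3) : gradient h x i = dd i h x := by
  rw [dd, ← toDual_gradient, InnerProductSpace.toDual_apply_apply, e3,
    EuclideanSpace.inner_single_right]
  simp

lemma norm_gradient_sq_eq_sum_dd_sq (h : E3 → ℝ) (x : E3) :
    ‖gradient h x‖ ^ 2 = ∑ i, dd i h x ^ 2 := by
  simp [EuclideanSpace.norm_sq_eq, gradient_apply_eq_dd]

lemma memLp_fderiv_of_memLp_dd {h : E3 → ℝ} (hh : ContDiff ℝ 1 h)
    (h1 : ∀ i, MemLp (dd i h) 2 volume) : MemLp (fderiv ℝ h) 2 volume := by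
  rw [memLp_two_iff_integrable_sq_norm (hh.continuous_fderiv one_ne_zero).aestronglyMeasurable]
  simp_rw [← norm_gradient_eq_norm_fderiv, norm_gradient_sq_eq_sum_dd_sq]
  exact integrable_finsetSum _ fun i _ => (h1 i).integrable_sq

lemma integral_dd_sq {h : E3 → ℝ} (hh : ContDiff ℝ 2 h) (i : Fin 3) (h0 : MemLp h 2 volume)
    (h1 : MemLp (dd i h) 2 volume) (h2 : MemLp (dd i (dd i h)) 2 volume) :
    ∫ x, dd i h x ^ 2 = -∫ x, h x * dd i (dd i h) x := by
  have hdd : ContDiff ℝ 1 (dd i h) :=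
    (ContinuousLinearMap.apply ℝ ℝ (e3 i)).contDiff.comp (hh.fderiv_right le_rfl)
  have ibp : ∫ x, h x * dd i (dd i h) x = -∫ x, dd i h x * dd i h x :=
    integral_mul_fderiv_eq_neg_fderiv_mul_of_integrable (h1.integrable_mul h1)
      (h0.integrable_mul h2) (h0.integrable_mul h1) (fun x _ => hh.differentiable two_ne_zero x)
      (fun x _ => hdd.differentiable one_ne_zero x)
  simp_rw [ibp, neg_neg, sq]

lemma integral_norm_gradient_sq {h : E3 → ℝ} (hh : ContDiff ℝ 2 h) (h0 : MemLp h 2 volume)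
    (h1 : ∀ i, MemLp (dd i h) 2 volume) (h2 : ∀ i, MemLp (dd i (dd i h)) 2 volume) :
    ∫ x, ‖gradient h x‖ ^ 2 = -∫ x, h x * lap h x := by
  have hint : ∀ i, Integrable (fun x => h x * dd i (dd i h) x) := fun i => h0.integrable_mul (h2 i)
  simp_rw [norm_gradient_sq_eq_sum_dd_sq, lap, Finset.mul_sum]
  rw [integral_finsetSum _ fun i _ => (h1 i).integrable_sq,
    integral_finsetSum _ fun i _ => hint i, ← Finset.sum_neg_distrib]
  exact Finset.sum_congr rfl fun i _ => integral_dd_sq hh i h0 (h1 i) (h2 i)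

lemma memLp_lap {h : E3 → ℝ} (h2 : ∀ i, MemLp (dd i (dd i h)) 2 volume) :
    MemLp (lap h) 2 volume :=
  memLp_finsetSum _ fun i _ => h2 i

lemma sq_lpNorm_fderiv_le_of_lap_eq_zero {h : E3 → ℝ} (hh : ContDiff ℝ 2 h)
    (h0 : MemLp h 2 volume) (h1 : ∀ i, MemLp (dd i h) 2 volume)
    (h2 : ∀ i, MemLp (dd i (dd i h)) 2 volume) {R : ℝ} (hsupp : ∀ x, R < ‖x‖ → lap h x = 0) :
    lpNorm (fderiv ℝ h) 2 volume ^ 2 ≤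
      lpNorm ((closedBall (0 : E3) R).indicator h) 2 volume * lpNorm (lap h) 2 volume := by
  have hlocal : ∀ x, h x * lap h x = (closedBall 0 R).indicator h x * lap h x := by
    intro x
    by_cases hx : x ∈ closedBall 0 R
    · rw [indicator_of_mem hx]
    · rw [hsupp x (by simpa using hx), mul_zero, mul_zero]
  calc lpNorm (fderiv ℝ h) 2 volume ^ 2 = ∫ x, ‖gradient h x‖ ^ 2 := by
        rw [← sqrt_integral_norm_gradient_sq_eq_lpNorm_fderiv
          (hh.continuous_fderiv two_ne_zero).aestronglyMeasurable,
          sq_sqrt (integral_nonneg fun _ => sq_nonneg _)]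
    _ = -∫ x, (closedBall 0 R).indicator h x * lap h x := by
        rw [integral_norm_gradient_sq hh h0 h1 h2]
        simp_rw [hlocal]
    _ ≤ _ := (neg_le_abs _).trans <|
        abs_integral_mul_le_lpNorm_mul_lpNorm (h0.indicator measurableSet_closedBall) (memLp_lap h2)

end Euclidean3

/-- **Gradient estimate with support:** if `Δh` is supported in `{|x| ≤ R}` then
`‖∇h‖_{L²} ≤ C R ‖Δh‖_{L²}` for `h ∈ H²(ℝ³)`. -/
theorem gradient_estimate_support :
    ∃ C : ℝ, 0 < C ∧ ∀ R : ℝ, 0 < R → ∀ h : E3 → ℝ,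
      ContDiff ℝ 2 h →
      MemLp h 2 volume →
      (∀ i, MemLp (dd i h) 2 volume) →
      (∀ i j, MemLp (dd i (dd j h)) 2 volume) →
      (∀ x, R < ‖x‖ → lap h x = 0) →
      Real.sqrt (∫ x, ‖gradient h x‖ ^ 2)
        ≤ C * R * Real.sqrt (∫ x, (lap h x) ^ 2) := by
  have hc : 0 ≤ ballSobolevConst := ENNReal.toReal_nonneg
  refine ⟨ballSobolevConst + 1, by positivity, fun R hR h hh h0 h1 h2 hsupp => ?_⟩
  have hDh : MemLp (fderiv ℝ h) 2 volume := memLp_fderiv_of_memLp_dd (hh.of_le one_le_two) h1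
  have hΔh : MemLp (lap h) 2 volume := memLp_lap fun i => h2 i i
  have hF : √(∫ x, lap h x ^ 2) = lpNorm (lap h) 2 volume := by
    simpa only [norm_eq_abs, sq_abs] using sqrt_integral_norm_sq_eq_lpNorm hΔh.1
  rw [sqrt_integral_norm_gradient_sq_eq_lpNorm_fderiv hDh.1, hF]
  set G := lpNorm (fderiv ℝ h) 2 volume
  set F := lpNorm (lap h) 2 volume
  have hG2 : G ^ 2 ≤ ballSobolevConst * R * G * F :=
    (sq_lpNorm_fderiv_le_of_lap_eq_zero hh h0 h1 (fun i => h2 i i) hsupp).trans <|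
      mul_le_mul_of_nonneg_right
        (lpNorm_indicator_closedBall_le (hh.of_le one_le_two) h0 hDh hR.le) lpNorm_nonneg
  have hRF : 0 ≤ R * F := mul_nonneg hR.le lpNorm_nonneg
  have hGF : G ≤ ballSobolevConst * R * F := by nlinarith [mul_nonneg hc hRF]
  linarith
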